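/- Let n ≥ 1, let c₀ ≥ 0, γ ∈ (0,1), T > 0, and let t_j > 0 with t_j ≤ T for 1 ≤ j ≤ n. Let E_0, …, E_n, D_1, …, D_n, F_1, …, F_n be nonnegative reals, let (A^{(j)}_{j−k})_{1≤k≤j≤n} be real kernels, and let (P^{(n)}_{n−j})_{1≤j≤n} be nonnegative reals satisfying both ∑_{j=k}^{n} P^{(n)}_{n−j} A^{(j)}_{j−k} = 1 for every 1 ≤ k ≤ n and ∑_{j=1}^{n} P^{(n)}_{n−j} · t_j^{−γ}/Γ(1−γ) ≤ π_A for some π_A > 0. If ∑_{k=1}^{j} A^{(j)}_{j−k} (E_k − E_{k−1}) + 2c₀ D_j ≤ 2F_j for every 1 ≤ j ≤ n, then E_n ≤ E_0 + 2 π_A Γ(1−γ) T^{γ} · max_{1≤j≤n} F_j. -/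

import Mathlib

/-!
Multiplying the `j`-th inequality by `P j ≥ 0` and summing, the complementary-kernel identity
collapses the double sum `∑ⱼ P j ∑ₖ A j k (E k - E (k-1))` into the telescoping sum
`∑ₖ (E k - E (k-1)) = E n - E 0`. Hence `E n - E 0 ≤ 2 ∑ⱼ P j F j ≤ 2 (∑ⱼ P j) max F`, and the
weight bound controls `∑ⱼ P j` because `t j ≤ T` gives `1 ≤ T ^ γ * t j ^ (-γ)`.
-/

open Finset

/-- `P j` plays the role of `P^{(n)}_{n-j}` and `A j k` that of `A^{(j)}_{j-k}`. -/
def IsComplementaryKernel {R : Type*} [Semiring R] (n : ℕ) (A : ℕ → ℕ → R) (P : ℕ → R) :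
    Prop :=
  ∀ k, 1 ≤ k → k ≤ n → ∑ j ∈ Icc k n, P j * A j k = 1

theorem sum_Icc_one_sub_pred {G : Type*} [AddCommGroup G] (E : ℕ → G) (n : ℕ) :
    ∑ k ∈ Icc 1 n, (E k - E (k - 1)) = E n - E 0 := by
  induction n with
  | zero => simp
  | succ n ih =>
    rw [sum_Icc_succ_top (by omega), ih, Nat.add_sub_cancel]
    abel

theorem IsComplementaryKernel.sum_mul_sum_eq {R : Type*} [CommSemiring R] {n : ℕ}
    {A : ℕ → ℕ → R} {P : ℕ → R} (hPA : IsComplementaryKernel n A P) (e : ℕ → R) :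
    ∑ j ∈ Icc 1 n, P j * ∑ k ∈ Icc 1 j, A j k * e k = ∑ k ∈ Icc 1 n, e k := by
  simp_rw [mul_sum, ← mul_assoc]
  rw [sum_comm' (s' := fun k => Icc k n) (t' := Icc 1 n)
    (by intro j k; simp only [mem_Icc]; omega)]
  refine sum_congr rfl fun k hk => ?_
  rw [mem_Icc] at hk
  rw [← sum_mul, hPA k hk.1 hk.2, one_mul]

theorem IsComplementaryKernel.sub_le_sum_mul {n : ℕ} {A : ℕ → ℕ → ℝ} {P : ℕ → ℝ}
    (hPA : IsComplementaryKernel n A P) (hP : ∀ j, 1 ≤ j → j ≤ n → 0 ≤ P j) {E G : ℕ → ℝ}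
    (hEG : ∀ j, 1 ≤ j → j ≤ n → ∑ k ∈ Icc 1 j, A j k * (E k - E (k - 1)) ≤ G j) :
    E n - E 0 ≤ ∑ j ∈ Icc 1 n, P j * G j := by
  rw [← sum_Icc_one_sub_pred, ← hPA.sum_mul_sum_eq]
  refine sum_le_sum fun j hj => ?_
  rw [mem_Icc] at hj
  exact mul_le_mul_of_nonneg_left (hEG j hj.1 hj.2) (hP j hj.1 hj.2)

theorem one_le_rpow_mul_rpow_neg {s T γ : ℝ} (hs : 0 < s) (hsT : s ≤ T) (hγ : 0 ≤ γ) :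
    1 ≤ T ^ γ * s ^ (-γ) := by
  have hT : 0 < T := hs.trans_le hsT
  calc (1 : ℝ) = T ^ γ * T ^ (-γ) := by rw [← Real.rpow_add hT, add_neg_cancel, Real.rpow_zero]
    _ ≤ T ^ γ * s ^ (-γ) := mul_le_mul_of_nonneg_left
      (Real.rpow_le_rpow_of_nonpos hs hsT (neg_nonpos.mpr hγ)) (Real.rpow_nonneg hT.le γ)

theorem sum_le_rpow_mul_sum_mul_rpow_neg {ι : Type*} (s : Finset ι) {P t : ι → ℝ} {T γ : ℝ}
    (hP : ∀ j ∈ s, 0 ≤ P j) (ht : ∀ j ∈ s, 0 < t j ∧ t j ≤ T) (hγ : 0 ≤ γ) :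
    ∑ j ∈ s, P j ≤ T ^ γ * ∑ j ∈ s, P j * t j ^ (-γ) := by
  rw [mul_sum]
  refine sum_le_sum fun j hj => ?_
  calc P j ≤ P j * (T ^ γ * t j ^ (-γ)) :=
        le_mul_of_one_le_right (hP j hj) (one_le_rpow_mul_rpow_neg (ht j hj).1 (ht j hj).2 hγ)
    _ = T ^ γ * (P j * t j ^ (-γ)) := by ring

theorem sum_mul_le_sum_mul_sup' {ι : Type*} (s : Finset ι) (hs : s.Nonempty) {P F : ι → ℝ}
    (hP : ∀ j ∈ s, 0 ≤ P j) : ∑ j ∈ s, P j * F j ≤ (∑ j ∈ s, P j) * s.sup' hs F := by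
  rw [sum_mul]
  exact sum_le_sum fun j hj => mul_le_mul_of_nonneg_left (le_sup' F hj) (hP j hj)

theorem discrete_stability_final_bound_general
    (n : ℕ) (hn : 1 ≤ n)
    (c₀ γ T πA : ℝ)
    (hc₀ : 0 ≤ c₀) (hγ0 : 0 < γ) (hγ1 : γ < 1) (hT : 0 < T)
    (t : ℕ → ℝ) (ht : ∀ j, 1 ≤ j → j ≤ n → 0 < t j ∧ t j ≤ T)
    (E D F : ℕ → ℝ)
    (hD : ∀ j, 1 ≤ j → j ≤ n → 0 ≤ D j)
    (hF : ∀ j, 1 ≤ j → j ≤ n → 0 ≤ F j)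
    (A : ℕ → ℕ → ℝ) (P : ℕ → ℝ)
    (hP : ∀ j, 1 ≤ j → j ≤ n → 0 ≤ P j)
    (hcomp : ∀ k, 1 ≤ k → k ≤ n → ∑ j ∈ Finset.Icc k n, P j * A j k = 1)
    (hker : ∑ j ∈ Finset.Icc 1 n, P j * (t j ^ (-γ) / Real.Gamma (1 - γ)) ≤ πA)
    (hineq : ∀ j, 1 ≤ j → j ≤ n →
      ∑ k ∈ Finset.Icc 1 j, A j k * (E k - E (k - 1)) + 2 * c₀ * D j ≤ 2 * F j) :
    E n ≤ E 0 + 2 * πA * Real.Gamma (1 - γ) * T ^ γ *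
      (Finset.Icc 1 n).sup' (Finset.nonempty_Icc.mpr hn) F := by
  set M := (Icc 1 n).sup' (nonempty_Icc.mpr hn) F
  have hΓ : 0 < Real.Gamma (1 - γ) := Real.Gamma_pos_of_pos (by linarith)
  have hM : 0 ≤ M := (hF 1 le_rfl hn).trans (le_sup' F (by simp [hn]))
  have hP' : ∀ j ∈ Icc 1 n, 0 ≤ P j := fun j hj => hP j (mem_Icc.mp hj).1 (mem_Icc.mp hj).2
  have hweight : ∑ j ∈ Icc 1 n, P j ≤ πA * Real.Gamma (1 - γ) * T ^ γ := by
    simp_rw [mul_div_assoc', ← sum_div, div_le_iff₀ hΓ] at hker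
    calc ∑ j ∈ Icc 1 n, P j ≤ T ^ γ * ∑ j ∈ Icc 1 n, P j * t j ^ (-γ) :=
          sum_le_rpow_mul_sum_mul_rpow_neg (Icc 1 n) hP'
            (fun j hj => ht j (mem_Icc.mp hj).1 (mem_Icc.mp hj).2) hγ0.le
      _ ≤ T ^ γ * (πA * Real.Gamma (1 - γ)) := by gcongr
      _ = πA * Real.Gamma (1 - γ) * T ^ γ := by ring
  have hdiff : E n - E 0 ≤ 2 * πA * Real.Gamma (1 - γ) * T ^ γ * M :=
    calc E n - E 0 ≤ ∑ j ∈ Icc 1 n, P j * (2 * F j) :=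
          IsComplementaryKernel.sub_le_sum_mul hcomp hP fun j h1 h2 => by
            linarith [hineq j h1 h2, mul_nonneg (mul_nonneg zero_le_two hc₀) (hD j h1 h2)]
      _ = 2 * ∑ j ∈ Icc 1 n, P j * F j := by
        rw [mul_sum]; exact sum_congr rfl fun _ _ => by ring
      _ ≤ 2 * ((∑ j ∈ Icc 1 n, P j) * M) := by
        gcongr; exact sum_mul_le_sum_mul_sup' (Icc 1 n) (nonempty_Icc.mpr hn) hP'
      _ ≤ 2 * (πA * Real.Gamma (1 - γ) * T ^ γ * M) := by gcongr
      _ = 2 * πA * Real.Gamma (1 - γ) * T ^ γ * M := by ring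
  linarith

/-- combined discrete stability bound: under the complementary-kernel
identity and the kernel weight bound, the recursion
`∑_{k=1}^{j} A^{(j)}_{j-k} (E_k - E_{k-1}) + 2c₀ D_j ≤ 2F_j` (1 ≤ j ≤ n) implies
`E_n ≤ E_0 + 2 π_A Γ(1-γ) T^γ · max_{1≤j≤n} F_j`.
Here `A j k` denotes `A^{(j)}_{j-k}` and `P j` denotes `P^{(n)}_{n-j}`. -/
theorem discrete_stability_final_bound
    (n : ℕ) (hn : 1 ≤ n)
    (c₀ γ T πA : ℝ)
    (hc₀ : 0 ≤ c₀) (hγ0 : 0 < γ) (hγ1 : γ < 1) (hT : 0 < T) (hπA : 0 < πA)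
    (t : ℕ → ℝ) (ht : ∀ j, 1 ≤ j → j ≤ n → 0 < t j ∧ t j ≤ T)
    (E D F : ℕ → ℝ)
    (hE : ∀ j, j ≤ n → 0 ≤ E j)
    (hD : ∀ j, 1 ≤ j → j ≤ n → 0 ≤ D j)
    (hF : ∀ j, 1 ≤ j → j ≤ n → 0 ≤ F j)
    (A : ℕ → ℕ → ℝ) (P : ℕ → ℝ)
    (hP : ∀ j, 1 ≤ j → j ≤ n → 0 ≤ P j)
    (hcomp : ∀ k, 1 ≤ k → k ≤ n → ∑ j ∈ Finset.Icc k n, P j * A j k = 1)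
    (hker : ∑ j ∈ Finset.Icc 1 n, P j * (t j ^ (-γ) / Real.Gamma (1 - γ)) ≤ πA)
    (hineq : ∀ j, 1 ≤ j → j ≤ n →
      ∑ k ∈ Finset.Icc 1 j, A j k * (E k - E (k - 1)) + 2 * c₀ * D j ≤ 2 * F j) :
    E n ≤ E 0 + 2 * πA * Real.Gamma (1 - γ) * T ^ γ *
      (Finset.Icc 1 n).sup' (Finset.nonempty_Icc.mpr hn) F :=
  discrete_stability_final_bound_general n hn c₀ γ T πA hc₀ hγ0 hγ1 hT t ht E D F hD hF A P hP hcomp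
    hker hineq
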